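/- arXiv:1705.01454 — 6 statements merged into one kernel-verified Lean document; each statement's English description precedes it below -/
import Mathlib

section
/- Every nonempty compact subset of ℝ^n has at least one extreme point, where a point x of a (not necessarily convex) set S is an extreme point if whenever x lies in the open segment {θy + (1−θ)z : θ ∈ (0,1)} with y, z ∈ S and this entire open segment is contained in S, then x = y = z. -/
/-- Extreme point of a (not necessarily convex) set `S`: a point of `S` that is not
an interior point of any line segment whose open part is contained in `S`. -/
def ExtremePt {E : Type*} [AddCommGroup E] [Module ℝ E] (S : Set E) (x : E) : Prop :=
  x ∈ S ∧ ∀ y ∈ S, ∀ z ∈ S, openSegment ℝ y z ⊆ S → x ∈ openSegment ℝ y z →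
    x = y ∧ x = z

theorem ExtremePt.of_mem_extremePoints {E : Type*} [AddCommGroup E] [Module ℝ E] {S : Set E}
    {x : E} (hx : x ∈ S.extremePoints ℝ) : ExtremePt S x :=
  have ⟨hxS, hext⟩ := mem_extremePoints.1 hx
  ⟨hxS, fun _ hy _ hz _ hxyz => (hext _ hy _ hz hxyz).imp Eq.symm Eq.symm⟩

/-- Every nonempty compact subset of ℝⁿ has an extreme point. -/
theorem stmt4 {n : ℕ} (S : Set (Fin n → ℝ)) (hne : S.Nonempty) (hS : IsCompact S) :
    ∃ x, ExtremePt S x := by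
  obtain ⟨x, hx⟩ := hS.extremePoints_nonempty hne
  exact ⟨x, .of_mem_extremePoints hx⟩
end

section
/- For a finite strategic game, every extreme point (in the generalized non-convex sense) of the noncooperative payoff region S_nc is a pure-payoff profile: if v is an extreme point of S_nc, then v = u(a) for some pure-strategy profile a ∈ ∏_{i∈N} A_i. -/
/-- The multilinear extension of the payoff function of a finite strategic game. -/
noncomputable def mixedPayoff {n : ℕ} {m : Fin n → ℕ}
    (u : (∀ i, Fin (m i)) → (Fin n → ℝ)) (σ : ∀ i, Fin (m i) → ℝ) : Fin n → ℝ :=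
  fun j => ∑ a : ∀ i, Fin (m i), (∏ i, σ i (a i)) * u a j

/-! Let `v = u σ` be extreme. Freezing all players but `i`, the payoff is linear in `σ i`, so an
open segment of mixed strategies of `i` through `σ i` is mapped onto an open segment through `v`
inside the payoff region; hence the strategies of `i` that still yield `v` form a face of the
simplex. This face is compact and nonempty, so it contains an extreme point of the simplex, that
is, a pure strategy. Purifying the players one at a time keeps the payoff equal to `v`. -/

open Function Set

theorem ExtremePt.isExtreme_preimage {E F : Type*} [AddCommGroup E] [Module ℝ E]
    [AddCommGroup F] [Module ℝ F] {S : Set F} {v : F} (hv : ExtremePt S v) {C : Set E}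
    (hC : Convex ℝ C) (g : E →ᵃ[ℝ] F) (hgC : g '' C ⊆ S) :
    IsExtreme ℝ C {c ∈ C | g c = v} := by
  refine ⟨fun c hc => hc.1, fun x hx y hy c ⟨_, hcv⟩ hc => ⟨hx, ?_⟩⟩
  have hseg : openSegment ℝ (g x) (g y) ⊆ S := by
    rw [← image_openSegment]
    exact (image_mono (hC.openSegment_subset hx hy)).trans hgC
  have hv_mem : v ∈ openSegment ℝ (g x) (g y) := by
    rw [← image_openSegment]
    exact ⟨c, hc, hcv⟩
  exact (hv.2 _ (hgC (mem_image_of_mem g hx)) _ (hgC (mem_image_of_mem g hy)) hseg hv_mem).1.symm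

theorem LinearMap.isClosed_setOf_apply_eq {E F : Type*} [NormedAddCommGroup E]
    [NormedSpace ℝ E] [FiniteDimensional ℝ E] [AddCommGroup F] [Module ℝ F]
    (g : E →ₗ[ℝ] F) (x : E) : IsClosed {c | g c = g x} := by
  have := (LinearMap.ker g).closed_of_finiteDimensional.preimage (continuous_sub_right x)
  convert this using 1
  ext c
  simp [sub_eq_zero]

theorem IsExtreme.exists_single_mem_of_stdSimplex {ι : Type*} [Fintype ι] [DecidableEq ι]
    {B : Set (ι → ℝ)} (hB : IsExtreme ℝ (stdSimplex ℝ ι) B) (hBc : IsClosed B)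
    (hBne : B.Nonempty) : ∃ k, Pi.single k 1 ∈ B := by
  obtain ⟨x, hx⟩ :=
    ((isCompact_stdSimplex ℝ ι).of_isClosed_subset hBc hB.1).extremePoints_nonempty hBne
  have hxS := hB.extremePoints_subset_extremePoints hx
  rw [← convexHull_rangle_single_eq_stdSimplex] at hxS
  obtain ⟨k, rfl⟩ := extremePoints_convexHull_subset hxS
  exact ⟨k, hx.1⟩

section Multilinear

variable {ι : Type*} [DecidableEq ι] {A : ι → Type*} [∀ i, Fintype (A i)]
  [∀ i, DecidableEq (A i)] {F : Type*} [AddCommGroup F] [Module ℝ F]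
  {f : MultilinearMap ℝ (fun i => A i → ℝ) F}

theorem ExtremePt.exists_update_single_eq {v : F}
    (hv : ExtremePt (f '' {σ | ∀ i, σ i ∈ stdSimplex ℝ (A i)}) v)
    {σ : ∀ i, A i → ℝ} (hσ : ∀ i, σ i ∈ stdSimplex ℝ (A i)) (hσv : f σ = v) (i : ι) :
    ∃ k, f (update σ i (Pi.single k 1)) = v := by
  set g := f.toLinearMap σ i
  have hface : IsExtreme ℝ (stdSimplex ℝ (A i)) {c ∈ stdSimplex ℝ (A i) | g c = v} := by
    refine hv.isExtreme_preimage (convex_stdSimplex ℝ _) g.toAffineMap ?_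
    rintro _ ⟨c, hc, rfl⟩
    exact ⟨update σ i c, (forall_update_iff σ _).2 ⟨hc, fun j _ => hσ j⟩, rfl⟩
  have hσi : g (σ i) = v := by simp [g, hσv]
  have hclosed : IsClosed {c ∈ stdSimplex ℝ (A i) | g c = v} :=
    (isClosed_stdSimplex ℝ _).inter (hσi ▸ g.isClosed_setOf_apply_eq (σ i))
  obtain ⟨k, -, hk⟩ := hface.exists_single_mem_of_stdSimplex hclosed ⟨σ i, hσ i, hσi⟩
  exact ⟨k, hk⟩

theorem ExtremePt.exists_single_on {v : F}
    (hv : ExtremePt (f '' {σ | ∀ i, σ i ∈ stdSimplex ℝ (A i)}) v) (s : Finset ι) :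
    ∃ σ : ∀ i, A i → ℝ, (∀ i, σ i ∈ stdSimplex ℝ (A i)) ∧ f σ = v ∧
      ∀ i ∈ s, ∃ k, σ i = Pi.single k 1 := by
  induction s using Finset.induction_on with
  | empty =>
    obtain ⟨σ, hσ, hσv⟩ := hv.1
    exact ⟨σ, hσ, hσv, by simp⟩
  | insert i s hi ih =>
    obtain ⟨σ, hσ, hσv, hpure⟩ := ih
    obtain ⟨k, hk⟩ := hv.exists_update_single_eq hσ hσv i
    refine ⟨update σ i (Pi.single k 1),
      (forall_update_iff σ _).2 ⟨single_mem_stdSimplex ℝ k, fun j _ => hσ j⟩, hk, ?_⟩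
    rintro j hj
    rcases Finset.mem_insert.1 hj with rfl | hj
    · exact ⟨k, update_self ..⟩
    · rw [update_of_ne (ne_of_mem_of_not_mem hj hi)]
      exact hpure j hj

theorem ExtremePt.exists_eq_apply_single [Fintype ι] {v : F}
    (hv : ExtremePt (f '' {σ | ∀ i, σ i ∈ stdSimplex ℝ (A i)}) v) :
    ∃ a : ∀ i, A i, v = f fun i => Pi.single (a i) 1 := by
  obtain ⟨σ, -, hσv, hpure⟩ := hv.exists_single_on Finset.univ
  choose a ha using fun i => hpure i (Finset.mem_univ i)
  exact ⟨a, by rw [← hσv, ← funext ha]⟩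

end Multilinear

section Game

variable {n : ℕ} {m : Fin n → ℕ} (u : (∀ i, Fin (m i)) → (Fin n → ℝ))

noncomputable def mixedPayoffMultilinear :
    MultilinearMap ℝ (fun i => Fin (m i) → ℝ) (Fin n → ℝ) :=
  ∑ a, ((MultilinearMap.mkPiAlgebra ℝ (Fin n) ℝ).compLinearMap
    fun i => LinearMap.proj (a i)).smulRight (u a)

theorem coe_mixedPayoffMultilinear : ⇑(mixedPayoffMultilinear u) = mixedPayoff u := by
  ext σ j
  simp [mixedPayoffMultilinear, mixedPayoff]

theorem mixedPayoff_single (a : ∀ i, Fin (m i)) :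
    mixedPayoff u (fun i => Pi.single (a i) 1) = u a := by
  ext j
  rw [mixedPayoff, Finset.sum_eq_single a]
  · simp
  · intro b _ hb
    obtain ⟨i, hi⟩ := Function.ne_iff.1 hb
    rw [Finset.prod_eq_zero (Finset.mem_univ i) (by simp [hi]), zero_mul]
  · simp

end Game

/-- Every extreme point of the noncooperative payoff region is a
pure-payoff profile. -/
theorem stmt7 {n : ℕ} (m : Fin n → ℕ) (u : (∀ i, Fin (m i)) → (Fin n → ℝ))
    (v : Fin n → ℝ)
    (hv : ExtremePt (mixedPayoff u '' {σ | ∀ i, σ i ∈ stdSimplex ℝ (Fin (m i))}) v) :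
    ∃ a : ∀ i, Fin (m i), v = u a := by
  rw [← coe_mixedPayoffMultilinear] at hv
  obtain ⟨a, rfl⟩ := hv.exists_eq_apply_single
  exact ⟨a, by rw [coe_mixedPayoffMultilinear, mixedPayoff_single]⟩
end

section
/- For a finite strategic game, ∅ ≠ ext(S_co) ⊆ ext(S_nc) ⊆ S_pu: the set of extreme points of the cooperative payoff region is nonempty, every such extreme point is an extreme point of the noncooperative payoff region, and every extreme point of the noncooperative payoff region is a pure-payoff profile. -/
/-!
A payoff vector `x` that is extreme in `S_nc` is a pure payoff. Write `x = U(σ)` for a mixed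
profile `σ`. Letting only player `i` deviate, `τ ↦ U(σ₋ᵢ, τ)` is linear, so it maps the simplex
`Δ(Aᵢ)` onto a convex subset of `S_nc` through `x`, namely the convex hull of the payoffs of the
pure deviations. As `x` is extreme there, it is the payoff of some pure deviation; doing this for
each player in turn makes `σ` pure. The rest is classical: `S_co` is a compact polytope, so it
has extreme points, each a pure payoff, and `S_pu ⊆ S_nc ⊆ S_co`.
-/

section ExtremePt

variable {E : Type*} [AddCommGroup E] [Module ℝ E] {S T : Set E} {x : E}

theorem extremePt_of_mem_extremePoints (hST : S ⊆ T) (hx : x ∈ S)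
    (hxT : x ∈ T.extremePoints ℝ) : ExtremePt S x :=
  ⟨hx, fun y hy z hz _ hxyz =>
    let h := (mem_extremePoints.1 hxT).2 y (hST hy) z (hST hz) hxyz
    ⟨h.1.symm, h.2.symm⟩⟩

theorem ExtremePt.mem_extremePoints_of_subset (hx : ExtremePt S x) (hT : Convex ℝ T)
    (hTS : T ⊆ S) (hxT : x ∈ T) : x ∈ T.extremePoints ℝ :=
  mem_extremePoints.2 ⟨hxT, fun y hy z hz hxyz =>
    let h := hx.2 y (hTS hy) z (hTS hz) ((hT.openSegment_subset hy hz).trans hTS) hxyz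
    ⟨h.1.symm, h.2.symm⟩⟩

end ExtremePt

def mixedProfiles {n : ℕ} (m : Fin n → ℕ) : Set (∀ i, Fin (m i) → ℝ) :=
  {σ | ∀ i, σ i ∈ stdSimplex ℝ (Fin (m i))}

namespace mixedProfiles

variable {n : ℕ} {m : Fin n → ℕ}

theorem pure_mem (a : ∀ i, Fin (m i)) :
    (fun i => Pi.single (a i) 1) ∈ mixedProfiles m :=
  fun i => single_mem_stdSimplex ℝ (a i)

theorem update_mem {σ : ∀ i, Fin (m i) → ℝ} (hσ : σ ∈ mixedProfiles m) (i : Fin n)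
    {τ : Fin (m i) → ℝ} (hτ : τ ∈ stdSimplex ℝ (Fin (m i))) :
    Function.update σ i τ ∈ mixedProfiles m := by
  intro j
  rcases eq_or_ne j i with rfl | hj
  · simpa using hτ
  · simpa [hj] using hσ j

end mixedProfiles

namespace mixedPayoff

variable {n : ℕ} {m : Fin n → ℕ} (u : (∀ i, Fin (m i)) → (Fin n → ℝ))

theorem eq_sum_smul (σ : ∀ i, Fin (m i) → ℝ) :
    mixedPayoff u σ = ∑ a, (∏ i, σ i (a i)) • u a := by
  ext j
  simp [mixedPayoff]

theorem sum_prod_eq_one {σ : ∀ i, Fin (m i) → ℝ} (hσ : σ ∈ mixedProfiles m) :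
    ∑ a : ∀ i, Fin (m i), ∏ i, σ i (a i) = 1 := by
  rw [← Fintype.prod_sum]
  exact Finset.prod_eq_one fun i _ => (hσ i).2

theorem mem_convexHull {σ : ∀ i, Fin (m i) → ℝ} (hσ : σ ∈ mixedProfiles m) :
    mixedPayoff u σ ∈ convexHull ℝ (Set.range u) := by
  rw [eq_sum_smul]
  exact (convex_convexHull ℝ _).sum_mem (fun a _ => Finset.prod_nonneg fun i _ => (hσ i).1 _)
    (sum_prod_eq_one hσ) fun a _ => subset_convexHull ℝ _ (Set.mem_range_self a)

theorem pure (a : ∀ i, Fin (m i)) : mixedPayoff u (fun i => Pi.single (a i) 1) = u a := by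
  rw [eq_sum_smul, Finset.sum_eq_single a]
  · simp
  · intro b _ hb
    obtain ⟨i, hi⟩ := Function.ne_iff.mp hb
    rw [Finset.prod_eq_zero (Finset.mem_univ i) (Pi.single_eq_of_ne hi 1), zero_smul]
  · simp

theorem update_eq_sum_smul (σ : ∀ i, Fin (m i) → ℝ) (i : Fin n) (τ : Fin (m i) → ℝ) :
    mixedPayoff u (Function.update σ i τ) =
      ∑ a, τ (a i) • (∏ j ∈ Finset.univ.erase i, σ j (a j)) • u a := by
  rw [eq_sum_smul]
  refine Finset.sum_congr rfl fun a _ => ?_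
  rw [← Finset.mul_prod_erase _ _ (Finset.mem_univ i), mul_smul, Function.update_self]
  congr 2
  exact Finset.prod_congr rfl fun j hj => by rw [Function.update_of_ne (Finset.ne_of_mem_erase hj)]

theorem isLinearMap_update (σ : ∀ i, Fin (m i) → ℝ) (i : Fin n) :
    IsLinearMap ℝ fun τ => mixedPayoff u (Function.update σ i τ) := by
  constructor <;> intros <;>
    simp only [update_eq_sum_smul, Pi.add_apply, Pi.smul_apply, add_smul, smul_eq_mul, mul_smul,
      Finset.sum_add_distrib, Finset.smul_sum]

theorem exists_update_single_eq_of_extremePt {σ : ∀ i, Fin (m i) → ℝ} (hσ : σ ∈ mixedProfiles m)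
    (hx : ExtremePt (mixedPayoff u '' mixedProfiles m) (mixedPayoff u σ)) (i : Fin n) :
    ∃ k, mixedPayoff u (Function.update σ i (Pi.single k 1)) = mixedPayoff u σ := by
  set f := fun τ => mixedPayoff u (Function.update σ i τ)
  have hf : IsLinearMap ℝ f := isLinearMap_update u σ i
  have hdev : f '' stdSimplex ℝ (Fin (m i)) ⊆ mixedPayoff u '' mixedProfiles m := by
    rintro _ ⟨τ, hτ, rfl⟩
    exact ⟨_, mixedProfiles.update_mem hσ i hτ, rfl⟩
  have hext : mixedPayoff u σ ∈ (f '' stdSimplex ℝ (Fin (m i))).extremePoints ℝ :=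
    hx.mem_extremePoints_of_subset ((convex_stdSimplex ℝ _).is_linear_image hf) hdev
      ⟨σ i, hσ i, by simp [f]⟩
  rw [← convexHull_rangle_single_eq_stdSimplex, hf.image_convexHull, ← Set.range_comp] at hext
  obtain ⟨k, hk⟩ := extremePoints_convexHull_subset hext
  exact ⟨k, hk⟩

theorem exists_pure_on_of_extremePt {x : Fin n → ℝ}
    (hx : ExtremePt (mixedPayoff u '' mixedProfiles m) x) (s : Finset (Fin n)) :
    ∃ σ ∈ mixedProfiles m, (∀ i ∈ s, ∃ k, σ i = Pi.single k 1) ∧ mixedPayoff u σ = x := by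
  induction s using Finset.induction_on with
  | empty =>
    obtain ⟨σ, hσ, rfl⟩ := hx.1
    exact ⟨σ, hσ, by simp, rfl⟩
  | insert i s _ ih =>
    obtain ⟨σ, hσ, hpure, rfl⟩ := ih
    obtain ⟨k, hk⟩ := exists_update_single_eq_of_extremePt u hσ hx i
    refine ⟨_, mixedProfiles.update_mem hσ i (single_mem_stdSimplex ℝ k), fun j hj => ?_, hk⟩
    rcases eq_or_ne j i with rfl | hji
    · exact ⟨k, Function.update_self ..⟩
    · rw [Function.update_of_ne hji]
      exact hpure j ((Finset.mem_insert.1 hj).resolve_left hji)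

theorem mem_range_of_extremePt {x : Fin n → ℝ}
    (hx : ExtremePt (mixedPayoff u '' mixedProfiles m) x) : x ∈ Set.range u := by
  obtain ⟨σ, -, hpure, rfl⟩ := exists_pure_on_of_extremePt u hx Finset.univ
  choose a ha using fun i => hpure i (Finset.mem_univ i)
  obtain rfl : σ = fun i => Pi.single (a i) 1 := funext ha
  exact ⟨a, (pure u a).symm⟩

end mixedPayoff

/-- `∅ ≠ ext(S_co) ⊆ ext(S_nc) ⊆ S_pu`, where `S_pu = u(∏Aᵢ)`,
`S_nc = u(∏Δ(Aᵢ))`, and `S_co = conv(S_pu)`. -/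
theorem stmt8 {n : ℕ} (m : Fin n → ℕ) (hm : ∀ i, 0 < m i)
    (u : (∀ i, Fin (m i)) → (Fin n → ℝ)) :
    (∃ x, ExtremePt (convexHull ℝ (Set.range u)) x) ∧
      (∀ x, ExtremePt (convexHull ℝ (Set.range u)) x →
        ExtremePt (mixedPayoff u '' {σ | ∀ i, σ i ∈ stdSimplex ℝ (Fin (m i))}) x) ∧
      (∀ x, ExtremePt (mixedPayoff u '' {σ | ∀ i, σ i ∈ stdSimplex ℝ (Fin (m i))}) x →
        x ∈ Set.range u) := by
  have hS_nc : mixedPayoff u '' mixedProfiles m ⊆ convexHull ℝ (Set.range u) := by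
    rintro _ ⟨σ, hσ, rfl⟩
    exact mixedPayoff.mem_convexHull u hσ
  refine ⟨?_, fun x hx => ?_, fun x hx => mixedPayoff.mem_range_of_extremePt u hx⟩
  · have : Nonempty (∀ i, Fin (m i)) := ⟨fun i => ⟨0, hm i⟩⟩
    obtain ⟨x, hx⟩ := (Set.finite_range u).isCompact_convexHull (𝕜 := ℝ) |>.extremePoints_nonempty
      ((Set.range_nonempty u).mono (subset_convexHull ℝ _))
    exact ⟨x, extremePt_of_mem_extremePoints subset_rfl (extremePoints_subset hx) hx⟩
  · have hx' := hx.mem_extremePoints_of_subset (convex_convexHull ℝ _) subset_rfl hx.1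
    obtain ⟨a, rfl⟩ := extremePoints_convexHull_subset (𝕜 := ℝ) hx'
    exact extremePt_of_mem_extremePoints hS_nc
      ⟨_, mixedProfiles.pure_mem a, mixedPayoff.pure u a⟩ hx'
end

section
/- Let S ⊂ ℝ² be a compact set with only finitely many extreme points (in the generalized non-convex sense). Suppose (v₁ᵗ, v₂ᵗ) is a sequence in S converging to (v₁*, v₂*) ∈ S with v₁ᵗ > v₁* and v₂* > v₂ᵗ for all t, and (v₂ᵗ − v₂*)/(v₁ᵗ − v₁*) → 0 as t → ∞. Then (v₁*, v₂*) is not on the Pareto frontier of S: there exists (w₁, w₂) ∈ S distinct from (v₁*, v₂*) with w₁ ≥ v₁* and w₂ ≥ v₂*. -/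
open Set Filter Topology

theorem IsCompact.exists_mem_extremePoints_isMaxOn {E : Type*} [AddCommGroup E] [Module ℝ E]
    [TopologicalSpace E] [T2Space E] [IsTopologicalAddGroup E] [ContinuousSMul ℝ E]
    [LocallyConvexSpace ℝ E] {A : Set E} (hA : IsCompact A) (hne : A.Nonempty)
    (l : StrongDual ℝ E) : ∃ x ∈ A.extremePoints ℝ, IsMaxOn l A x := by
  have hface : IsExposed ℝ A (l.toExposed A) := ContinuousLinearMap.toExposed.isExposed
  obtain ⟨x, hx⟩ := (hface.isCompact hA).extremePoints_nonempty
    (hA.exists_isMaxOn hne l.continuous.continuousOn)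
  exact ⟨x, hface.isExtreme.extremePoints_subset_extremePoints hx,
    fun y hy => (mem_extremePoints.1 hx).1.2 y hy⟩

/-- Unlike membership in `extremePoints`, `ExtremePt` only tests segments lying in `S`; these can
be shrunk towards `x` into the neighbourhood `K`. -/
theorem extremePt_of_mem_extremePoints_inter {E : Type*} [AddCommGroup E] [Module ℝ E]
    [TopologicalSpace E] [IsTopologicalAddGroup E] [ContinuousSMul ℝ E] {S K : Set E} {x : E}
    (hx : x ∈ (S ∩ K).extremePoints ℝ) (hK : K ∈ 𝓝 x) : ExtremePt S x := by
  refine ⟨hx.1.1, fun y _ z _ hsub hxyz => ?_⟩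
  have hshrink : ∀ u : E, ∀ᶠ δ : ℝ in 𝓝 0, x + δ • (u - x) ∈ K := fun u => by
    have : Tendsto (fun δ : ℝ => x + δ • (u - x)) (𝓝 0) (𝓝 x) := by
      simpa using ((tendsto_id (x := 𝓝 (0 : ℝ))).smul_const (u - x)).const_add x
    exact this hK
  obtain ⟨δ, ⟨hyK, hzK⟩, hδ0, hδ1⟩ := (((hshrink y).and (hshrink z)).filter_mono
    nhdsWithin_le_nhds |>.and (Ioo_mem_nhdsGT (zero_lt_one' ℝ))).exists
  obtain ⟨a, b, ha, hb, hab, hxab⟩ := hxyz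
  have hyS : x + δ • (y - x) ∈ S := hsub
    ⟨(1 - δ) * a + δ, (1 - δ) * b, by nlinarith, by nlinarith, by linear_combination (1 - δ) * hab,
      by linear_combination (norm := module) (1 - δ) • hxab⟩
  have hzS : x + δ • (z - x) ∈ S := hsub
    ⟨(1 - δ) * a, (1 - δ) * b + δ, by nlinarith, by nlinarith, by linear_combination (1 - δ) * hab,
      by linear_combination (norm := module) (1 - δ) • hxab⟩
  obtain ⟨hy', hz'⟩ := (mem_extremePoints.1 hx).2 _ ⟨hyS, hyK⟩ _ ⟨hzS, hzK⟩
    ⟨a, b, ha, hb, hab, by linear_combination (norm := module) δ • hxab + ((1 - δ) * hab) • x⟩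
  exact ⟨by simpa [hδ0.ne', sub_eq_zero, eq_comm] using hy',
    by simpa [hδ0.ne', sub_eq_zero, eq_comm] using hz'⟩

theorem exists_extremePt_above_line_of_forall_le_imp_eq {S : Set (ℝ × ℝ)} (hS : IsCompact S)
    {u p : ℝ × ℝ} (hu : ∀ w ∈ S, u ≤ w → w = u) (hp : p ∈ S) (hp₂ : p.2 ≤ u.2) {c : ℝ}
    (hc : 0 < c) (hpc : u.2 - p.2 < c * (p.1 - u.1)) :
    ∃ q, ExtremePt S q ∧ q.2 < u.2 ∧ u.2 - q.2 < c * (q.1 - u.1) := by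
  have hT : IsCompact (S ∩ {w | w.2 ≤ u.2}) :=
    hS.inter_right (isClosed_le continuous_snd continuous_const)
  obtain ⟨q, hq, hqmax⟩ := hT.exists_mem_extremePoints_isMaxOn ⟨p, hp, hp₂⟩
    (.snd ℝ ℝ ℝ + c • .fst ℝ ℝ ℝ)
  have hpq : p.2 + c * p.1 ≤ q.2 + c * q.1 := by simpa using hqmax ⟨hp, hp₂⟩
  have hqc : u.2 - q.2 < c * (q.1 - u.1) := by linarith
  have hq₂ : q.2 < u.2 := by
    refine hq.1.2.lt_of_ne fun hq₂ => ?_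
    have hq₁ : u.1 < q.1 := sub_pos.1 (pos_of_mul_pos_right (by linarith) hc.le)
    exact hq₁.ne (congrArg Prod.fst (hu q hq.1.1 ⟨hq₁.le, hq₂.ge⟩)).symm
  exact ⟨q, extremePt_of_mem_extremePoints_inter hq
    (continuous_snd.continuousAt.preimage_mem_nhds (Iic_mem_nhds hq₂)), hq₂, hqc⟩

theorem Set.Finite.eventually_forall_mul_sub_lt_sub {ι : Type*} {l : Filter ι} {c : ι → ℝ}
    {s : Set (ℝ × ℝ)} (hs : s.Finite) (hc : Tendsto c l (𝓝 0)) {u : ℝ × ℝ}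
    (hsu : ∀ e ∈ s, e.2 < u.2) : ∀ᶠ i in l, ∀ e ∈ s, c i * (e.1 - u.1) < u.2 - e.2 :=
  hs.eventually_all.2 fun e he => by
    have hce : Tendsto (fun i => c i * (e.1 - u.1)) l (𝓝 0) := by
      simpa using hc.mul_const (e.1 - u.1)
    exact hce.eventually_lt_const (sub_pos.2 (hsu e he))

theorem stmt13_general (S : Set (ℝ × ℝ)) (hS : IsCompact S)
    (hfin : {x | ExtremePt S x}.Finite)
    (v : ℕ → ℝ × ℝ) (hv : ∀ t, v t ∈ S)
    (vstar : ℝ × ℝ)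
    (h1 : ∀ t, vstar.1 < (v t).1) (h2 : ∀ t, (v t).2 < vstar.2)
    (hslope : Filter.Tendsto (fun t => ((v t).2 - vstar.2) / ((v t).1 - vstar.1))
      Filter.atTop (nhds 0)) :
    ∃ w ∈ S, w ≠ vstar ∧ vstar.1 ≤ w.1 ∧ vstar.2 ≤ w.2 := by
  by_contra! hdom
  have hmax : ∀ w ∈ S, vstar ≤ w → w = vstar := fun w hw hle =>
    by_contra fun hne => (hdom w hw hne hle.1).not_ge hle.2
  set c : ℕ → ℝ := fun t => -2 * (((v t).2 - vstar.2) / ((v t).1 - vstar.1))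
  have hc : Tendsto c atTop (𝓝 0) := by simpa [c, neg_mul] using hslope.const_mul (-2)
  have hcv : ∀ t, 0 < c t ∧ vstar.2 - (v t).2 < c t * ((v t).1 - vstar.1) := fun t => by
    have hd : 0 < (v t).1 - vstar.1 := sub_pos.2 (h1 t)
    have hline : c t * ((v t).1 - vstar.1) = 2 * (vstar.2 - (v t).2) := by
      simp only [c]; field_simp; ring
    have hgap := sub_pos.2 (h2 t)
    exact ⟨pos_of_mul_pos_left (by linarith) hd.le, by linarith⟩
  choose q hqext hq₂ hqc using fun t => exists_extremePt_above_line_of_forall_le_imp_eq hS hmax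
    (hv t) (h2 t).le (hcv t).1 (hcv t).2
  have hbelow : ∀ᶠ t in atTop, ∀ e ∈ {x | ExtremePt S x ∧ x.2 < vstar.2},
      c t * (e.1 - vstar.1) < vstar.2 - e.2 :=
    (hfin.subset fun _ he => he.1).eventually_forall_mul_sub_lt_sub hc fun _ he => he.2
  obtain ⟨t, ht⟩ := hbelow.exists
  exact (ht (q t) ⟨hqext t, hq₂ t⟩).not_gt (hqc t)

/-- If a compact set `S ⊆ ℝ²` with finitely many extreme points
contains a sequence converging to `v⋆ ∈ S` from the lower-right with slopes tending
to `0`, then `v⋆` is Pareto dominated within `S`. -/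
theorem stmt13 (S : Set (ℝ × ℝ)) (hS : IsCompact S)
    (hfin : {x | ExtremePt S x}.Finite)
    (v : ℕ → ℝ × ℝ) (hv : ∀ t, v t ∈ S)
    (vstar : ℝ × ℝ) (hvstar : vstar ∈ S)
    (hlim : Filter.Tendsto v Filter.atTop (nhds vstar))
    (h1 : ∀ t, vstar.1 < (v t).1) (h2 : ∀ t, (v t).2 < vstar.2)
    (hslope : Filter.Tendsto (fun t => ((v t).2 - vstar.2) / ((v t).1 - vstar.1))
      Filter.atTop (nhds 0)) :
    ∃ w ∈ S, w ≠ vstar ∧ vstar.1 ≤ w.1 ∧ vstar.2 ≤ w.2 :=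
  stmt13_general S hS hfin v hv vstar h1 h2 hslope
end

section
/- Let S ⊂ ℝ² be compact such that every extreme point of S (generalized non-convex sense) belongs to a given dense subset D ⊆ S. Then the Pareto frontier of D is contained in the Pareto frontier of S: if v ∈ D is not Pareto dominated by any point of D, then v is not Pareto dominated by any point of S. -/
/-!
Suppose `w ∈ S` dominates `v`. Density of `D` and maximality of `v` in `D` rule out a point of `S`
strictly better than `v` in both coordinates, so `w` improves `v` in one coordinate only, say the
first. Among the points of `S` dominating `v`, a point `m` maximizing the first coordinate then
has `m₂ = v₂`, and it is extreme: if `m ± d ∈ S` with `d` small, the first coordinates of `m ± d`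
exceed `v₁`, so their second coordinates are at most `v₂ = m₂`, forcing `d₂ = 0`, after which
maximality of `m₁` forces `d₁ = 0`. Hence `m ∈ D`, and it dominates `v` with `m ≠ v`.
-/

open Filter Topology

section ExtremePt

variable {E : Type*} [AddCommGroup E] [Module ℝ E] [TopologicalSpace E]
  [ContinuousAdd E] [ContinuousSMul ℝ E]

theorem ExtremePt.of_mem_nhds {S U : Set E} {x : E} (hx : x ∈ S) (hU : U ∈ 𝓝 x)
    (h : ∀ d, x + d ∈ S ∩ U → x - d ∈ S ∩ U → d = 0) : ExtremePt S x := by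
  refine ⟨hx, fun y _ z _ hsub hxyz => ?_⟩
  obtain ⟨a, b, ha, hb, hab, rfl⟩ := hxyz
  set x := a • y + b • z
  have hseg : ∀ t, -b < t → t < a → x + t • (z - y) ∈ S := fun t h₁ h₂ =>
    hsub ⟨a - t, b + t, by linarith, by linarith, by linarith, by simp only [x]; module⟩
  have hnear : ∀ᶠ t in 𝓝 (0 : ℝ), x + t • (z - y) ∈ U :=
    (Continuous.tendsto' (by fun_prop) 0 x (by simp)).eventually_mem hU
  have hsmall : ∀ᶠ t in 𝓝[>] (0 : ℝ), (t < a ∧ t < b) ∧ x + t • (z - y) ∈ U ∧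
      x + (-t) • (z - y) ∈ U :=
    nhdsWithin_le_nhds <| ((gt_mem_nhds ha).and (gt_mem_nhds hb)).and <|
      hnear.and ((continuous_neg.tendsto' 0 0 neg_zero).eventually hnear)
  obtain ⟨t, ⟨⟨hta, htb⟩, hU_add, hU_sub⟩, ht⟩ := (hsmall.and self_mem_nhdsWithin).exists
  have ht0 : t ≠ 0 := ne_of_gt ht
  have hneg : x - t • (z - y) = x + (-t) • (z - y) := by rw [neg_smul, sub_eq_add_neg]
  have hd : t • (z - y) = 0 :=
    h _ ⟨hseg t (by linarith) hta, hU_add⟩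
      ⟨hneg ▸ hseg (-t) (by linarith) (by linarith), hneg ▸ hU_sub⟩
  obtain rfl : y = z := (sub_eq_zero.1 ((smul_eq_zero.1 hd).resolve_left ht0)).symm
  have hxy : x = y := by simp only [x, ← add_smul, hab, one_smul]
  exact ⟨hxy, hxy⟩

theorem exists_extremePt_of_dominates (f g : E →L[ℝ] ℝ)
    (hfg : ∀ d, f d = 0 → g d = 0 → d = 0) {S : Set E} (hS : IsCompact S) {v w : E}
    (hstrict : ∀ u ∈ S, ¬(f v < f u ∧ g v < g u)) (hw : w ∈ S) (hvw₁ : f v < f w)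
    (hvw₂ : g v ≤ g w) : ∃ m, ExtremePt S m ∧ f v < f m ∧ g m = g v := by
  set A := S ∩ {u | f v ≤ f u ∧ g v ≤ g u}
  have hA : IsCompact A := hS.inter_right
    ((isClosed_le continuous_const f.continuous).inter (isClosed_le continuous_const g.continuous))
  have hwA : w ∈ A := ⟨hw, hvw₁.le, hvw₂⟩
  obtain ⟨m, ⟨hmS, -, hm₂⟩, hmax⟩ := hA.exists_isMaxOn ⟨w, hwA⟩ f.continuous.continuousOn
  have hvm : f v < f m := hvw₁.trans_le (hmax hwA)
  have hmv : g m = g v := le_antisymm (not_lt.1 fun h => hstrict m hmS ⟨hvm, h⟩) hm₂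
  refine ⟨m, ExtremePt.of_mem_nhds hmS ((isOpen_lt continuous_const f.continuous).mem_nhds hvm)
    fun d ⟨hp, hp₁⟩ ⟨hq, hq₁⟩ => ?_, hvm, hmv⟩
  have hg_add : g (m + d) ≤ g v := not_lt.1 fun h => hstrict _ hp ⟨hp₁, h⟩
  have hg_sub : g (m - d) ≤ g v := not_lt.1 fun h => hstrict _ hq ⟨hq₁, h⟩
  simp only [Set.mem_ofPred_eq, map_add, map_sub] at hp₁ hq₁ hg_add hg_sub
  have hgd : g d = 0 := by linarith
  have hf_add : f (m + d) ≤ f m := hmax ⟨hp, by simp only [map_add]; linarith, by simp [hgd, hm₂]⟩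
  have hf_sub : f (m - d) ≤ f m := hmax ⟨hq, by simp only [map_sub]; linarith, by simp [hgd, hm₂]⟩
  simp only [map_add, map_sub] at hf_add hf_sub
  exact hfg d (by linarith) hgd

end ExtremePt

theorem stmt14_general (S D : Set (ℝ × ℝ)) (hS : IsCompact S)
    (hdense : S ⊆ closure D)
    (hext : ∀ x, ExtremePt S x → x ∈ D)
    (v : ℝ × ℝ)
    (hPD : ∀ w ∈ D, v.1 ≤ w.1 → v.2 ≤ w.2 → w = v) :
    ∀ w ∈ S, v.1 ≤ w.1 → v.2 ≤ w.2 → w = v := by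
  have hstrict : ∀ u ∈ S, ¬(v.1 < u.1 ∧ v.2 < u.2) := by
    rintro u hu hvu
    obtain ⟨d, hvd, hd⟩ := mem_closure_iff.1 (hdense hu) _
      ((isOpen_lt continuous_const continuous_fst).inter
        (isOpen_lt continuous_const continuous_snd)) hvu
    obtain rfl := hPD d hd hvd.1.le hvd.2.le
    exact lt_irrefl d.1 hvd.1
  intro w hw hvw₁ hvw₂
  by_contra hwv
  rcases hvw₁.lt_or_eq with h₁ | h₁
  · obtain ⟨m, hm, hvm, hmv⟩ := exists_extremePt_of_dominates (.fst ℝ ℝ ℝ) (.snd ℝ ℝ ℝ)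
      (fun _ h₁ h₂ => Prod.ext h₁ h₂) hS hstrict hw h₁ hvw₂
    obtain rfl := hPD m (hext m hm) hvm.le hmv.ge
    exact lt_irrefl _ hvm
  · have h₂ : v.2 < w.2 := hvw₂.lt_of_ne fun h₂ => hwv (Prod.ext h₁.symm h₂.symm)
    obtain ⟨m, hm, hvm, hmv⟩ := exists_extremePt_of_dominates (.snd ℝ ℝ ℝ) (.fst ℝ ℝ ℝ)
      (fun _ h₂ h₁ => Prod.ext h₁ h₂) hS (fun u hu h => hstrict u hu h.symm) hw h₂ hvw₁
    obtain rfl := hPD m (hext m hm) hmv.ge hvm.le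
    exact lt_irrefl _ hvm

/-- If `S ⊆ ℝ²` is compact, `D ⊆ S` is dense in `S`, and every extreme
point of `S` lies in `D`, then a point of `D` not Pareto dominated within `D` is not
Pareto dominated within `S`. -/
theorem stmt14 (S D : Set (ℝ × ℝ)) (hS : IsCompact S) (hDS : D ⊆ S)
    (hdense : S ⊆ closure D)
    (hext : ∀ x, ExtremePt S x → x ∈ D)
    (v : ℝ × ℝ) (hv : v ∈ D)
    (hPD : ∀ w ∈ D, v.1 ≤ w.1 → v.2 ≤ w.2 → w = v) :
    ∀ w ∈ S, v.1 ≤ w.1 → v.2 ≤ w.2 → w = v :=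
  stmt14_general S D hS hdense hext v hPD
end

section
/- For a two-player finite strategic game, let R_nc denote the set of payoff pairs achievable by rational mixed-strategy profiles (all probabilities rational). Then P(R_nc) ⊆ P(S_nc): every payoff pair in R_nc that is not Pareto dominated within R_nc is also not Pareto dominated within S_nc. -/
/-!
Write `f`, `g` for the two bilinear payoff functions. Suppose a profile `(x, y)` has
`f(x, y) > v₁` and `g(x, y) ≥ v₂`. By density of rational profiles, every profile with `f > v₁`
has `g ≤ v₂`, so `g` attains a local maximum over profiles at `(x, y)`. Since `(x, y)` lies in the
relative interior of the product of the faces spanned by its supports, the bilinear function `g`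
is constant on that product. Rational profiles are dense in this product too, so one of them has
`f > v₁` and `g = g(x, y) ≥ v₂`, contradicting Pareto optimality of `v` among rational payoffs.
-/

/-- The bilinear extension of the payoff pair function of a two-player finite game. -/
noncomputable def mixedPayoff₂ {A₁ A₂ : Type*} [Fintype A₁] [Fintype A₂]
    (u : A₁ → A₂ → ℝ × ℝ) (σ₁ : A₁ → ℝ) (σ₂ : A₂ → ℝ) : ℝ × ℝ :=
  ∑ a₁ : A₁, ∑ a₂ : A₂, (σ₁ a₁ * σ₂ a₂) • u a₁ a₂

open Matrix Filter Topology Set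

section Simplex

variable {ι : Type*} [Fintype ι]

def rationalFace (x : ι → ℝ) : Set (ι → ℝ) :=
  {q ∈ stdSimplex ℝ ι | (∀ i, ∃ r : ℚ, q i = r) ∧ ∀ i, x i = 0 → q i = 0}

theorem mem_closure_rationalFace {x : ι → ℝ} (hx : x ∈ stdSimplex ℝ ι) :
    x ∈ closure (rationalFace x) := by
  let T : Set (ι → ℝ) :=
    univ.pi fun i => if x i = 0 then {0} else Ioi 0 ∩ range ((↑) : ℚ → ℝ)
  have hxT : x ∈ closure T := by
    rw [closure_pi_set]
    intro i _
    by_cases hi : x i = 0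
    · simp [hi]
    · simp only [hi, if_false]
      exact Rat.denseRange_cast.open_subset_closure_inter isOpen_Ioi ((hx.1 i).lt_of_ne' hi)
  -- approximate `x` by positive rationals on its support, then renormalize
  let normalize : (ι → ℝ) → (ι → ℝ) := fun r => (∑ i, r i)⁻¹ • r
  have hcont : ContinuousAt normalize x := by fun_prop (disch := simp [hx.2])
  have hfix : normalize x = x := by simp [normalize, hx.2]
  refine closure_mono ?_ (hfix ▸ mem_closure_image hcont hxT)
  rintro _ ⟨r, hr, rfl⟩
  have hr' (i : ι) : r i ∈ range ((↑) : ℚ → ℝ) ∧ (x i = 0 → r i = 0) ∧ (x i ≠ 0 → 0 < r i) := by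
    have := hr i (mem_univ i)
    by_cases hi : x i = 0 <;> simp_all
  have hr0 (i : ι) : 0 ≤ r i := by
    by_cases hi : x i = 0
    · exact ((hr' i).2.1 hi).ge
    · exact ((hr' i).2.2 hi).le
  obtain ⟨i₀, hi₀⟩ : ∃ i, x i ≠ 0 := by
    by_contra! h
    simpa [h] using hx.2
  have hpos : 0 < ∑ i, r i :=
    Finset.sum_pos' (fun i _ => hr0 i) ⟨i₀, Finset.mem_univ _, (hr' i₀).2.2 hi₀⟩
  choose q hq using fun i => (hr' i).1
  refine ⟨⟨fun i => ?_, ?_⟩, fun i => ⟨(∑ j, q j)⁻¹ * q i, ?_⟩, fun i hi => ?_⟩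
  · exact mul_nonneg (inv_nonneg.2 hpos.le) (hr0 i)
  · simp [normalize, ← Finset.mul_sum, hpos.ne']
  · simp [normalize, hq]
  · simp [normalize, (hr' i).2.1 hi]

theorem eventually_add_smul_sub_mem_stdSimplex {x x' : ι → ℝ} (hx : x ∈ stdSimplex ℝ ι)
    (hx' : x' ∈ stdSimplex ℝ ι) (hsupp : ∀ i, x i = 0 → x' i = 0) :
    ∀ᶠ s : ℝ in 𝓝 0, x + s • (x' - x) ∈ stdSimplex ℝ ι := by
  have hsum (s : ℝ) : ∑ i, (x + s • (x' - x)) i = 1 := by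
    simp [Finset.sum_add_distrib, ← Finset.mul_sum, hx.2, hx'.2]
  refine (eventually_all.2 fun i => ?_).mono fun s hs => ⟨hs, hsum s⟩
  by_cases hi : x i = 0
  · exact Eventually.of_forall fun s => by simp [hi, hsupp i hi]
  · have hlim : Tendsto (fun s : ℝ => (x + s • (x' - x)) i) (𝓝 0) (𝓝 (x i)) :=
      (by fun_prop : Continuous fun s : ℝ => x i + s * (x' i - x i)).tendsto' 0 _ (by simp)
    exact (hlim.eventually_const_lt ((hx.1 i).lt_of_ne' hi)).mono fun _ h => h.le

end Simplex

theorem eq_zero_of_eventually_bilinear_nonpos {α β γ : ℝ}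
    (h : ∀ᶠ p : ℝ × ℝ in 𝓝 0, p.1 * α + p.2 * β + p.1 * p.2 * γ ≤ 0) :
    α = 0 ∧ β = 0 ∧ γ = 0 := by
  obtain ⟨ε, hε, hball⟩ := Metric.eventually_nhds_iff.1 h
  have key (s t : ℝ) (hs : |s| < ε) (ht : |t| < ε) : s * α + t * β + s * t * γ ≤ 0 :=
    hball (y := (s, t)) (by
      rw [Prod.dist_eq, Prod.fst_zero, Prod.snd_zero, Real.dist_0_eq_abs, Real.dist_0_eq_abs]
      exact max_lt hs ht)
  have hs : 0 < ε / 2 := by positivity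
  have hsε : |ε / 2| < ε := by rw [abs_of_pos hs]; linarith
  have hsε' : |-(ε / 2)| < ε := by rwa [abs_neg]
  have h0 : |(0 : ℝ)| < ε := by simpa using hε
  have hα : ε / 2 * α = 0 := by linarith [key _ _ hsε h0, key _ _ hsε' h0]
  have hβ : ε / 2 * β = 0 := by linarith [key _ _ h0 hsε, key _ _ h0 hsε']
  have hγ : ε / 2 * (ε / 2) * γ = 0 := by linarith [key _ _ hsε hsε, key _ _ hsε hsε']
  exact ⟨(mul_eq_zero.1 hα).resolve_left hs.ne', (mul_eq_zero.1 hβ).resolve_left hs.ne',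
    (mul_eq_zero.1 hγ).resolve_left (by positivity)⟩

section Bilinear

variable {A₁ A₂ : Type*} [Fintype A₁] [Fintype A₂]

theorem add_smul_dotProduct_mulVec_add_smul (M : Matrix A₁ A₂ ℝ) (x d : A₁ → ℝ)
    (y e : A₂ → ℝ) (s t : ℝ) :
    (x + s • d) ⬝ᵥ M *ᵥ (y + t • e) = x ⬝ᵥ M *ᵥ y + s * (d ⬝ᵥ M *ᵥ y) +
      t * (x ⬝ᵥ M *ᵥ e) + s * t * (d ⬝ᵥ M *ᵥ e) := by
  simp only [mulVec_add, mulVec_smul, add_dotProduct, dotProduct_add, smul_dotProduct,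
    dotProduct_smul, smul_eq_mul]
  ring

theorem dotProduct_mulVec_eq_of_isLocalMaxOn (M : Matrix A₁ A₂ ℝ) {x x' : A₁ → ℝ}
    {y y' : A₂ → ℝ}
    (hmax : IsLocalMaxOn (fun p : (A₁ → ℝ) × (A₂ → ℝ) => p.1 ⬝ᵥ M *ᵥ p.2)
      (stdSimplex ℝ A₁ ×ˢ stdSimplex ℝ A₂) (x, y))
    (hx : x ∈ stdSimplex ℝ A₁) (hx' : x' ∈ stdSimplex ℝ A₁) (hsx : ∀ a, x a = 0 → x' a = 0)
    (hy : y ∈ stdSimplex ℝ A₂) (hy' : y' ∈ stdSimplex ℝ A₂) (hsy : ∀ b, y b = 0 → y' b = 0) :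
    x' ⬝ᵥ M *ᵥ y' = x ⬝ᵥ M *ᵥ y := by
  let path : ℝ × ℝ → (A₁ → ℝ) × (A₂ → ℝ) := fun p => (x + p.1 • (x' - x), y + p.2 • (y' - y))
  have hpath : Tendsto path (𝓝 0) (𝓝[stdSimplex ℝ A₁ ×ˢ stdSimplex ℝ A₂] (x, y)) := by
    refine tendsto_nhdsWithin_iff.2 ⟨?_, ?_⟩
    · exact (by fun_prop : Continuous path).tendsto' 0 _ (by simp [path])
    · exact (eventually_add_smul_sub_mem_stdSimplex hx hx' hsx).prod_nhds
        (eventually_add_smul_sub_mem_stdSimplex hy hy' hsy)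
  -- `(x, y)` is interior to the face product, so the bilinear polynomial below has a local
  -- maximum at `0 ∈ ℝ²` and all its non-constant coefficients vanish
  have hexpand := add_smul_dotProduct_mulVec_add_smul M x (x' - x) y (y' - y)
  obtain ⟨hα, hβ, hγ⟩ := eq_zero_of_eventually_bilinear_nonpos
    (α := (x' - x) ⬝ᵥ M *ᵥ y) (β := x ⬝ᵥ M *ᵥ (y' - y)) (γ := (x' - x) ⬝ᵥ M *ᵥ (y' - y)) <|
    (hpath.eventually hmax).mono fun p hp => by
      have := hexpand p.1 p.2
      simp only [path] at hp
      linarith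
  have := hexpand 1 1
  simp only [one_smul, add_sub_cancel, one_mul, hα, hβ, hγ] at this
  linarith

theorem exists_mem_rationalFace_prod_of_mem_nhds {x : A₁ → ℝ} {y : A₂ → ℝ}
    (hx : x ∈ stdSimplex ℝ A₁) (hy : y ∈ stdSimplex ℝ A₂) {U : Set ((A₁ → ℝ) × (A₂ → ℝ))}
    (hU : U ∈ 𝓝 (x, y)) : ∃ p ∈ U, p.1 ∈ rationalFace x ∧ p.2 ∈ rationalFace y := by
  have hxy : (x, y) ∈ closure (rationalFace x ×ˢ rationalFace y) := by
    rw [closure_prod_eq]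
    exact ⟨mem_closure_rationalFace hx, mem_closure_rationalFace hy⟩
  exact mem_closure_iff_nhds.1 hxy U hU

theorem dotProduct_mulVec_lt_of_forall_rational {F G : Matrix A₁ A₂ ℝ} {c₁ c₂ : ℝ}
    (hrat : ∀ x ∈ stdSimplex ℝ A₁, ∀ y ∈ stdSimplex ℝ A₂,
      (∀ a, ∃ r : ℚ, x a = r) → (∀ b, ∃ r : ℚ, y b = r) →
      c₁ < x ⬝ᵥ F *ᵥ y → x ⬝ᵥ G *ᵥ y < c₂)
    {x : A₁ → ℝ} {y : A₂ → ℝ} (hx : x ∈ stdSimplex ℝ A₁) (hy : y ∈ stdSimplex ℝ A₂)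
    (hF : c₁ < x ⬝ᵥ F *ᵥ y) : x ⬝ᵥ G *ᵥ y < c₂ := by
  have hFcont : Continuous fun p : (A₁ → ℝ) × (A₂ → ℝ) => p.1 ⬝ᵥ F *ᵥ p.2 := by fun_prop
  have hGcont : Continuous fun p : (A₁ → ℝ) × (A₂ → ℝ) => p.1 ⬝ᵥ G *ᵥ p.2 := by fun_prop
  have hweak : ∀ x' ∈ stdSimplex ℝ A₁, ∀ y' ∈ stdSimplex ℝ A₂,
      c₁ < x' ⬝ᵥ F *ᵥ y' → x' ⬝ᵥ G *ᵥ y' ≤ c₂ := by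
    intro x' hx' y' hy' hF'
    by_contra! hG'
    have hU : {p : (A₁ → ℝ) × (A₂ → ℝ) | c₁ < p.1 ⬝ᵥ F *ᵥ p.2 ∧ c₂ < p.1 ⬝ᵥ G *ᵥ p.2} ∈
        𝓝 (x', y') :=
      ((isOpen_lt continuous_const hFcont).inter (isOpen_lt continuous_const hGcont)).mem_nhds
        ⟨hF', hG'⟩
    obtain ⟨p, ⟨hpF, hpG⟩, hp₁, hp₂⟩ := exists_mem_rationalFace_prod_of_mem_nhds hx' hy' hU
    exact (hrat _ hp₁.1 _ hp₂.1 hp₁.2.1 hp₂.2.1 hpF).not_gt hpG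
  by_contra! hG
  have hFnhds : {p : (A₁ → ℝ) × (A₂ → ℝ) | c₁ < p.1 ⬝ᵥ F *ᵥ p.2} ∈ 𝓝 (x, y) :=
    (isOpen_lt continuous_const hFcont).mem_nhds hF
  have hmax : IsLocalMaxOn (fun p : (A₁ → ℝ) × (A₂ → ℝ) => p.1 ⬝ᵥ G *ᵥ p.2)
      (stdSimplex ℝ A₁ ×ˢ stdSimplex ℝ A₂) (x, y) := by
    filter_upwards [self_mem_nhdsWithin, nhdsWithin_le_nhds hFnhds] with p hp hpF
    exact (hweak _ hp.1 _ hp.2 hpF).trans hG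
  obtain ⟨p, hpF, hp₁, hp₂⟩ := exists_mem_rationalFace_prod_of_mem_nhds hx hy hFnhds
  have hpG := dotProduct_mulVec_eq_of_isLocalMaxOn G hmax hx hp₁.1 hp₁.2.2 hy hp₂.1 hp₂.2.2
  exact (hrat _ hp₁.1 _ hp₂.1 hp₁.2.1 hp₂.2.1 hpF).not_ge (hpG ▸ hG)

end Bilinear

theorem mixedPayoff₂_eq {A₁ A₂ : Type*} [Fintype A₁] [Fintype A₂]
    (u : A₁ → A₂ → ℝ × ℝ) (x : A₁ → ℝ) (y : A₂ → ℝ) :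
    mixedPayoff₂ u x y =
      (x ⬝ᵥ of (fun a b => (u a b).1) *ᵥ y, x ⬝ᵥ of (fun a b => (u a b).2) *ᵥ y) := by
  ext <;> simp only [mixedPayoff₂, dotProduct, mulVec, of_apply, Prod.fst_sum, Prod.snd_sum,
      Prod.smul_fst, Prod.smul_snd, smul_eq_mul, Finset.mul_sum] <;>
    exact Finset.sum_congr rfl fun _ _ => Finset.sum_congr rfl fun _ _ => by ring

theorem stmt15_general {A₁ A₂ : Type*} [Fintype A₁] [Fintype A₂]
    (u : A₁ → A₂ → ℝ × ℝ)
    (Snc Rnc : Set (ℝ × ℝ))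
    (hSnc : Snc = {v | ∃ σ₁ ∈ stdSimplex ℝ A₁, ∃ σ₂ ∈ stdSimplex ℝ A₂,
      v = mixedPayoff₂ u σ₁ σ₂})
    (hRnc : Rnc = {v | ∃ σ₁ ∈ stdSimplex ℝ A₁, ∃ σ₂ ∈ stdSimplex ℝ A₂,
      (∀ a₁, ∃ r : ℚ, σ₁ a₁ = (r : ℝ)) ∧ (∀ a₂, ∃ r : ℚ, σ₂ a₂ = (r : ℝ)) ∧
      v = mixedPayoff₂ u σ₁ σ₂})
    (v : ℝ × ℝ)
    (hPD : ∀ w ∈ Rnc, v.1 ≤ w.1 → v.2 ≤ w.2 → w = v) :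
    ∀ w ∈ Snc, v.1 ≤ w.1 → v.2 ≤ w.2 → w = v := by
  subst hSnc hRnc
  set F : Matrix A₁ A₂ ℝ := of fun a b => (u a b).1
  set G : Matrix A₁ A₂ ℝ := of fun a b => (u a b).2
  have hrat : ∀ x ∈ stdSimplex ℝ A₁, ∀ y ∈ stdSimplex ℝ A₂,
      (∀ a, ∃ r : ℚ, x a = r) → (∀ b, ∃ r : ℚ, y b = r) →
      v.1 ≤ x ⬝ᵥ F *ᵥ y → v.2 ≤ x ⬝ᵥ G *ᵥ y → x ⬝ᵥ F *ᵥ y = v.1 ∧ x ⬝ᵥ G *ᵥ y = v.2 := by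
    intro x hx y hy hrx hry h₁ h₂
    have hw := hPD _ ⟨x, hx, y, hy, hrx, hry, rfl⟩
    simp only [mixedPayoff₂_eq, Prod.ext_iff] at hw
    exact hw h₁ h₂
  rintro _ ⟨x, hx, y, hy, rfl⟩ hw₁ hw₂
  rw [mixedPayoff₂_eq] at hw₁ hw₂ ⊢
  refine Prod.ext (hw₁.eq_of_not_lt' fun h₁ => hw₂.not_gt ?_)
    (hw₂.eq_of_not_lt' fun h₂ => hw₁.not_gt ?_)
  · refine dotProduct_mulVec_lt_of_forall_rational (fun x hx y hy hrx hry hF => ?_) hx hy h₁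
    exact lt_of_not_ge fun hG => hF.ne' (hrat x hx y hy hrx hry hF.le hG).1
  · refine dotProduct_mulVec_lt_of_forall_rational (fun x hx y hy hrx hry hG => ?_) hx hy h₂
    exact lt_of_not_ge fun hF => hG.ne' (hrat x hx y hy hrx hry hF hG.le).2

/-- For a two-player finite strategic game, `P(R_nc) ⊆ P(S_nc)`, where
`R_nc` is the set of payoff pairs of rational mixed-strategy profiles and `S_nc` the
noncooperative payoff region. -/
theorem stmt15 {A₁ A₂ : Type*} [Fintype A₁] [Fintype A₂] [Nonempty A₁] [Nonempty A₂]
    (u : A₁ → A₂ → ℝ × ℝ)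
    (Snc Rnc : Set (ℝ × ℝ))
    (hSnc : Snc = {v | ∃ σ₁ ∈ stdSimplex ℝ A₁, ∃ σ₂ ∈ stdSimplex ℝ A₂,
      v = mixedPayoff₂ u σ₁ σ₂})
    (hRnc : Rnc = {v | ∃ σ₁ ∈ stdSimplex ℝ A₁, ∃ σ₂ ∈ stdSimplex ℝ A₂,
      (∀ a₁, ∃ r : ℚ, σ₁ a₁ = (r : ℝ)) ∧ (∀ a₂, ∃ r : ℚ, σ₂ a₂ = (r : ℝ)) ∧
      v = mixedPayoff₂ u σ₁ σ₂})
    (v : ℝ × ℝ) (hv : v ∈ Rnc)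
    (hPD : ∀ w ∈ Rnc, v.1 ≤ w.1 → v.2 ≤ w.2 → w = v) :
    ∀ w ∈ Snc, v.1 ≤ w.1 → v.2 ≤ w.2 → w = v :=
  stmt15_general u Snc Rnc hSnc hRnc v hPD
end
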